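/- arXiv:2301.01271 — 6 statements merged into one kernel-verified Lean document; each statement's English description precedes it below -/
import Mathlib

section
/- Let X be a totally ordered topological space with the order topology that is connected and separable. Then X is second-countable: the collection of open intervals (a,b) with endpoints in a countable dense subset D, together with half-open intervals [min X, a) and (a, max X] for a ∈ D when the minimum or maximum exists, forms a countable basis for the topology of X. -/
theorem stmt6 (X : Type*) [TopologicalSpace X] [LinearOrder X] [OrderTopology X]
    [ConnectedSpace X] [TopologicalSpace.SeparableSpace X] :
    SecondCountableTopology X :=
  haveI : DenselyOrdered X := denselyOrdered_of_preconnectedSpace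
  .of_separableSpace_orderTopology X
end

section
/- A connected, separable, totally ordered topological space with the order topology is metrizable. -/
theorem stmt7 (X : Type*) [TopologicalSpace X] [LinearOrder X] [OrderTopology X]
    [ConnectedSpace X] [TopologicalSpace.SeparableSpace X] :
    TopologicalSpace.MetrizableSpace X := by
  have : DenselyOrdered X := denselyOrdered_of_preconnectedSpace
  have : SecondCountableTopology X := .of_separableSpace_orderTopology X
  exact TopologicalSpace.metrizableSpace_of_t3_secondCountable X
end

section
/- Let X be a connected, separable subset of a topological space; let ≿ be a complete transitive continuous order on X and ≽ a complete transitive relation on X × X with closed graph (A3), jointly satisfying A1 and A1'. Suppose x', x'', y ∈ X satisfy (x', y) ≽ (w, z) ≽ (x'', y) for some (w,z) ∈ X × X. Then there exists x* ∈ X, unique up to indifference, with (x*, y) ∼ (w, z) and x' ≿ x* ≿ x''. -/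
/-!
The sets `{x | (x, y) ≽ (w, z)}` and `{x | (w, z) ≽ (x, y)}` are closed by A3, cover `X` by
completeness and contain `x'` and `x''` respectively, so connectedness of `X` makes them meet.
Any common point `x*` is the required one: A1 turns the chains `(x', y) ≽ (w, z) ≽ (x*, y)`
and `(x*, y) ≽ (w, z) ≽ (x'', y)` into `x' ≿ x* ≿ x''`, and likewise any two such points are
indifferent.
-/

open Set

theorem nonempty_inter_of_isClosed_of_union_eq_univ {α : Type*} [TopologicalSpace α]
    [PreconnectedSpace α] {s t : Set α} (hs : IsClosed s) (ht : IsClosed t)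
    (hst : s ∪ t = univ) (hs' : s.Nonempty) (ht' : t.Nonempty) : (s ∩ t).Nonempty := by
  simpa using isPreconnected_closed_iff.mp isPreconnected_univ s t hs ht hst.ge
    (by simpa using hs') (by simpa using ht')

section PairPreference

variable {X : Type*} {R : X → X → Prop} {S : X → X → X → X → Prop}

theorem exists_indifferent_of_between [TopologicalSpace X] [PreconnectedSpace X]
    (hScomp : ∀ a b c d : X, S a b c d ∨ S c d a b)
    (hA3 : IsClosed {p : X × X × X × X | S p.1 p.2.1 p.2.2.1 p.2.2.2})
    {x' x'' y w z : X} (h1 : S x' y w z) (h2 : S w z x'' y) :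
    ∃ xs, S xs y w z ∧ S w z xs y :=
  nonempty_inter_of_isClosed_of_union_eq_univ
    (s := {x | S x y w z}) (t := {x | S w z x y})
    (hA3.preimage (by fun_prop : Continuous fun x : X => (x, y, w, z)))
    (hA3.preimage (by fun_prop : Continuous fun x : X => (w, z, x, y)))
    (eq_univ_of_forall fun x => hScomp x y w z) ⟨x', h1⟩ ⟨x'', h2⟩

theorem rel_of_pair_le_of_le (hStrans : ∀ a b c d e f : X, S a b c d → S c d e f → S a b e f)
    (hA1 : ∀ a b c : X, S a c b c ↔ R a b) {a b c u v : X}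
    (hac : S a c u v) (hbc : S u v b c) : R a b :=
  (hA1 a b c).mp (hStrans _ _ _ _ _ _ hac hbc)

end PairPreference

theorem stmt13_general {X : Type*} [TopologicalSpace X] [ConnectedSpace X]
    (R : X → X → Prop) (S : X → X → X → X → Prop)
    (hScomp : ∀ a b c d : X, S a b c d ∨ S c d a b)
    (hStrans : ∀ a b c d e f : X, S a b c d → S c d e f → S a b e f)
    (hA3 : IsClosed {p : X × X × X × X | S p.1 p.2.1 p.2.2.1 p.2.2.2})
    (hA1 : ∀ a b c : X, S a c b c ↔ R a b)
    (x' x'' y w z : X)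
    (h1 : S x' y w z) (h2 : S w z x'' y) :
    ∃ xs : X, (S xs y w z ∧ S w z xs y) ∧ R x' xs ∧ R xs x'' ∧
      ∀ x2 : X, (S x2 y w z ∧ S w z x2 y) → (R xs x2 ∧ R x2 xs) := by
  obtain ⟨xs, hxs_ge, hxs_le⟩ := exists_indifferent_of_between hScomp hA3 h1 h2
  have hR : ∀ {a b c u v : X}, S a c u v → S u v b c → R a b :=
    rel_of_pair_le_of_le hStrans hA1
  exact ⟨xs, ⟨hxs_ge, hxs_le⟩, hR h1 hxs_le, hR hxs_ge h2,
    fun x2 ⟨hx2_ge, hx2_le⟩ => ⟨hR hxs_ge hx2_le, hR hx2_ge hxs_le⟩⟩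

theorem stmt13 {X : Type*} [TopologicalSpace X] [ConnectedSpace X]
    [TopologicalSpace.SeparableSpace X]
    (R : X → X → Prop) (S : X → X → X → X → Prop)
    (hRcomp : ∀ a b : X, R a b ∨ R b a)
    (hRtrans : ∀ a b c : X, R a b → R b c → R a c)
    (hRcont : ∀ y : X, IsOpen {x : X | R x y ∧ ¬ R y x} ∧ IsOpen {x : X | R y x ∧ ¬ R x y})
    (hScomp : ∀ a b c d : X, S a b c d ∨ S c d a b)
    (hStrans : ∀ a b c d e f : X, S a b c d → S c d e f → S a b e f)
    (hA3 : IsClosed {p : X × X × X × X | S p.1 p.2.1 p.2.2.1 p.2.2.2})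
    (hA1 : ∀ a b c : X, S a c b c ↔ R a b)
    (hA1' : ∀ a b c : X, S c a c b ↔ R b a)
    (x' x'' y w z : X)
    (h1 : S x' y w z) (h2 : S w z x'' y) :
    ∃ xs : X, (S xs y w z ∧ S w z xs y) ∧ R x' xs ∧ R xs x'' ∧
      ∀ x2 : X, (S x2 y w z ∧ S w z x2 y) → (R xs x2 ∧ R x2 xs) :=
  stmt13_general R S hScomp hStrans hA3 hA1 x' x'' y w z h1 h2
end

section
/- Let X be a connected subset of a topological space, ≿ complete and transitive on X, and ≽ complete, transitive on X × X, satisfying the crossover axiom A2 ((x,y) ∼ (z,w) ⟺ (x,z) ∼ (y,w)), the closed-graph axiom A3, and jointly with ≿ the consistency axiom A1 ((x,z) ≽ (y,z) ⟺ x ≿ y). Then the dual consistency axiom A1' holds: for all x, y, z ∈ X, (z,y) ≽ (z,x) if and only if x ≿ y. -/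
/-!
If `x ∼ y`, the crossover axiom turns `(y,z) ∼ (x,z)` into `(z,y) ∼ (z,x)`. If `x ≻ y`, the sets
`{w | (w,y) ≽ (w,x)}` and `{w | (w,x) ≽ (w,y)}` are closed by A3 and cover `X` by completeness;
a common point `w` would give `(w,y) ∼ (w,x)`, hence by crossover `(y,w) ∼ (x,w)`, contradicting
`x ≻ y`. The first set contains `x`, so by connectedness the second one is empty.
-/

section DualConsistency

variable {X : Type*} {R : X → X → Prop} {S : X → X → X → X → Prop}

theorem pairPref_refl (hScomp : ∀ a b c d : X, S a b c d ∨ S c d a b) (a b : X) : S a b a b :=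
  (hScomp a b a b).elim id id

theorem pairPref_diag (hScomp : ∀ a b c d : X, S a b c d ∨ S c d a b)
    (hA2 : ∀ x y z w : X, (S x y z w ∧ S z w x y) ↔ (S x z y w ∧ S y w x z)) (a b : X) :
    S a a b b :=
  ((hA2 a a b b).mpr ⟨pairPref_refl hScomp a b, pairPref_refl hScomp a b⟩).1

theorem pairPref_dual_of_indiff
    (hA2 : ∀ x y z w : X, (S x y z w ∧ S z w x y) ↔ (S x z y w ∧ S y w x z))
    (hA1 : ∀ a b c : X, S a c b c ↔ R a b) {x y : X} (hxy : R x y) (hyx : R y x) (z : X) :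
    S z y z x := by
  have hyxzz : S y x z z ∧ S z z y x :=
    (hA2 y x z z).mpr ⟨(hA1 y x z).mpr hyx, (hA1 x y z).mpr hxy⟩
  exact ((hA2 z z y x).mp ⟨hyxzz.2, hyxzz.1⟩).1

theorem not_pairPref_indiff_of_strict
    (hA2 : ∀ x y z w : X, (S x y z w ∧ S z w x y) ↔ (S x z y w ∧ S y w x z))
    (hA1 : ∀ a b c : X, S a c b c ↔ R a b) {x y : X} (hyx : ¬ R y x) (w : X) :
    ¬ (S w y w x ∧ S w x w y) := by
  intro hwyx
  have hwwyx : S w w y x ∧ S y x w w := (hA2 w w y x).mpr hwyx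
  exact hyx ((hA1 y x w).mp ((hA2 y x w w).mp ⟨hwwyx.2, hwwyx.1⟩).1)

theorem isClosed_setOf_pairPref_left [TopologicalSpace X]
    (hA3 : IsClosed {p : X × X × X × X | S p.1 p.2.1 p.2.2.1 p.2.2.2}) (a b : X) :
    IsClosed {w | S w a w b} :=
  hA3.preimage (by fun_prop : Continuous fun w : X => (w, a, w, b))

theorem not_pairPref_dual_of_strict [TopologicalSpace X] [ConnectedSpace X]
    (hScomp : ∀ a b c d : X, S a b c d ∨ S c d a b)
    (hStrans : ∀ a b c d e f : X, S a b c d → S c d e f → S a b e f)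
    (hA2 : ∀ x y z w : X, (S x y z w ∧ S z w x y) ↔ (S x z y w ∧ S y w x z))
    (hA3 : IsClosed {p : X × X × X × X | S p.1 p.2.1 p.2.2.1 p.2.2.2})
    (hA1 : ∀ a b c : X, S a c b c ↔ R a b) {x y : X} (hxy : R x y) (hyx : ¬ R y x) (z : X) :
    ¬ S z x z y := by
  intro hz
  have hx : S x y x x := hStrans x y y y x x ((hA1 x y y).mpr hxy) (pairPref_diag hScomp hA2 y x)
  obtain ⟨w, -, hw⟩ := isPreconnected_closed_iff.mp isPreconnected_univ
    {w | S w y w x} {w | S w x w y}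
    (isClosed_setOf_pairPref_left hA3 y x) (isClosed_setOf_pairPref_left hA3 x y)
    (fun w _ => hScomp w y w x) ⟨x, trivial, hx⟩ ⟨z, trivial, hz⟩
  exact not_pairPref_indiff_of_strict hA2 hA1 hyx w hw

end DualConsistency

theorem stmt15_general {X : Type*} [TopologicalSpace X] [ConnectedSpace X]
    (R : X → X → Prop) (S : X → X → X → X → Prop)
    (hRcomp : ∀ a b : X, R a b ∨ R b a)
    (hScomp : ∀ a b c d : X, S a b c d ∨ S c d a b)
    (hStrans : ∀ a b c d e f : X, S a b c d → S c d e f → S a b e f)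
    (hA2 : ∀ x y z w : X, (S x y z w ∧ S z w x y) ↔ (S x z y w ∧ S y w x z))
    (hA3 : IsClosed {p : X × X × X × X | S p.1 p.2.1 p.2.2.1 p.2.2.2})
    (hA1 : ∀ a b c : X, S a c b c ↔ R a b) :
    ∀ x y z : X, S z y z x ↔ R x y := by
  intro x y z
  constructor
  · intro hz
    by_contra hxy
    exact not_pairPref_dual_of_strict hScomp hStrans hA2 hA3 hA1
      ((hRcomp x y).resolve_left hxy) hxy z hz
  · intro hxy
    by_cases hyx : R y x
    · exact pairPref_dual_of_indiff hA2 hA1 hxy hyx z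
    · exact (hScomp z y z x).resolve_right
        (not_pairPref_dual_of_strict hScomp hStrans hA2 hA3 hA1 hxy hyx z)

theorem stmt15 {X : Type*} [TopologicalSpace X] [ConnectedSpace X]
    (R : X → X → Prop) (S : X → X → X → X → Prop)
    (hRcomp : ∀ a b : X, R a b ∨ R b a)
    (hRtrans : ∀ a b c : X, R a b → R b c → R a c)
    (hScomp : ∀ a b c d : X, S a b c d ∨ S c d a b)
    (hStrans : ∀ a b c d e f : X, S a b c d → S c d e f → S a b e f)
    (hA2 : ∀ x y z w : X, (S x y z w ∧ S z w x y) ↔ (S x z y w ∧ S y w x z))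
    (hA3 : IsClosed {p : X × X × X × X | S p.1 p.2.1 p.2.2.1 p.2.2.2})
    (hA1 : ∀ a b c : X, S a c b c ↔ R a b) :
    ∀ x y z : X, S z y z x ↔ R x y :=
  stmt15_general R S hRcomp hScomp hStrans hA2 hA3 hA1
end

section
/- Let X be a connected and separable subset of a topological space, ≿ a complete transitive relation on X, and ≽ a complete transitive relation on X × X satisfying the crossover axiom A2 and the closed-graph axiom A3, with ≿ and ≽ jointly satisfying the consistency axiom A1. Then there exists a continuous function u : X → ℝ such that x ≿ y ⟺ u(x) ≥ u(y) and (x,y) ≽ (z,w) ⟺ u(x) − u(y) ≥ u(z) − u(w), and u is unique up to positive affine transformations. -/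
/-!
Closedness of `≽` and connectedness of `X` make `(x, y) ∼ (z, t)` solvable in `t` as soon as both
sides can be bracketed, since the closed sets `{t | (x, y) ≽ (z, t)}` and `{t | (z, t) ≽ (x, y)}`
cover `X`. This yields midpoints, the algebra of differences (reversal, crossover, addition) and
an Archimedean property: the closed set of upper bounds of an infinite chain of equal positive
steps would also be open.

Fix `a ≻ b` and measure `q - p` by the supremum of the dyadic `n / 2^k` such that `n` steps of size
`(a - b) / 2^k` fit between `p` and `q`. This length is finite and additive, and the signed length
`u x` of `x - b` represents `≽`. It is continuous because from any `x₀` one can step down (up)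
by `(a - b) / 2^k` unless everything below (above) `x₀` is that close to it. Conversely, for a
representation `v`, `n` such steps fit in `q - p` iff `n (v a - v b) / 2^k ≤ v q - v p`, which
forces `v = (v a - v b) u + v b`.
-/

open Set Filter Topology

theorem exists_one_div_two_pow_lt {ε : ℝ} (hε : 0 < ε) : ∃ k : ℕ, 1 / 2 ^ k < ε := by
  obtain ⟨k, hk⟩ := exists_pow_lt_of_lt_one hε (by norm_num : (1 : ℝ) / 2 < 1)
  exact ⟨k, by rwa [one_div_pow] at hk⟩

theorem le_of_forall_le_add_one_div_two_pow {x c : ℝ} (h : ∀ k : ℕ, x ≤ c + 1 / 2 ^ k) :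
    x ≤ c :=
  le_of_forall_pos_le_add fun _ hε =>
    let ⟨k, hk⟩ := exists_one_div_two_pow_lt hε
    (h k).trans (by linarith)

theorem csSup_dyadic_le {r : ℝ} (hr : 0 ≤ r) :
    sSup {x | ∃ n k : ℕ, (n : ℝ) / 2 ^ k ≤ r ∧ (n : ℝ) / 2 ^ k = x} = r := by
  have hbdd : BddAbove {x | ∃ n k : ℕ, (n : ℝ) / 2 ^ k ≤ r ∧ (n : ℝ) / 2 ^ k = x} :=
    ⟨r, by rintro _ ⟨n, k, h, rfl⟩; exact h⟩
  refine le_antisymm (csSup_le ⟨0, 0, 0, by simpa using hr, by simp⟩ ?_) (le_of_forall_lt ?_)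
  · rintro _ ⟨n, k, h, rfl⟩
    exact h
  · intro c hc
    obtain ⟨k, hk⟩ := exists_one_div_two_pow_lt (sub_pos.mpr hc)
    refine lt_csSup_of_lt hbdd ⟨⌊r * 2 ^ k⌋₊, k, ?_, rfl⟩ ?_
    · rw [div_le_iff₀ (by positivity)]
      exact Nat.floor_le (by positivity)
    · rw [lt_div_iff₀ (by positivity)]
      calc c * 2 ^ k < (r - 1 / 2 ^ k) * 2 ^ k := by gcongr; linarith
        _ = r * 2 ^ k - 1 := by field_simp
        _ < ⌊r * 2 ^ k⌋₊ := by linarith [Nat.lt_floor_add_one (r * 2 ^ k)]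

/-- `R x y` stands for `x ≿ y` and `S x y z w` for `(x, y) ≽ (z, w)`, read as
`x - y ≥ z - w`. -/
structure DifferenceStructure (X : Type*) [TopologicalSpace X] where
  R : X → X → Prop
  S : X → X → X → X → Prop
  total_R : ∀ a b, R a b ∨ R b a
  trans_R : ∀ {a b c}, R a b → R b c → R a c
  total_S : ∀ a b c d, S a b c d ∨ S c d a b
  trans_S : ∀ {a b c d e f}, S a b c d → S c d e f → S a b e f
  crossover : ∀ x y z w, (S x y z w ∧ S z w x y) ↔ (S x z y w ∧ S y w x z)
  isClosed_S : IsClosed {p : X × X × X × X | S p.1 p.2.1 p.2.2.1 p.2.2.2}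
  consistency : ∀ a b c, S a c b c ↔ R a b

namespace DifferenceStructure

variable {X : Type*} [TopologicalSpace X] (D : DifferenceStructure X)

def Sim (x y z w : X) : Prop := D.S x y z w ∧ D.S z w x y

def Represents (u : X → ℝ) : Prop := ∀ x y z w, D.S x y z w ↔ u x - u y ≥ u z - u w

variable {D} {x y z w c p q e₁ e₂ : X} {n : ℕ} {v : X → ℝ}

theorem R_refl (x : X) : D.R x x := (D.total_R x x).elim id id

theorem R_of_not_R (h : ¬ D.R x y) : D.R y x := (D.total_R x y).resolve_left h

theorem S_refl (x y : X) : D.S x y x y := (D.total_S x y x y).elim id id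

theorem S_of_not_S (h : ¬ D.S x y z w) : D.S z w x y := (D.total_S x y z w).resolve_left h

theorem Sim.symm (h : D.Sim x y z w) : D.Sim z w x y := ⟨h.2, h.1⟩

theorem Sim.trans {a b : X} (h : D.Sim x y z w) (h' : D.Sim z w a b) : D.Sim x y a b :=
  ⟨D.trans_S h.1 h'.1, D.trans_S h'.2 h.2⟩

theorem Sim.cross (h : D.Sim x y z w) : D.Sim x z y w := (D.crossover x y z w).mp h

theorem Sim.rev (h : D.Sim x y z w) : D.Sim w z y x := h.cross.symm.cross.symm

theorem sim_diag_iff : D.Sim x y c c ↔ D.R x y ∧ D.R y x := by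
  rw [Sim, D.crossover, D.consistency, D.consistency]

theorem S_diag_right_iff : D.S x y c c ↔ D.R x y := by
  have hyc : D.Sim y y c c := sim_diag_iff.mpr ⟨R_refl y, R_refl y⟩
  rw [← D.consistency x y y]
  exact ⟨fun h => D.trans_S h hyc.2, fun h => D.trans_S h hyc.1⟩

theorem S_diag_left_iff : D.S c c x y ↔ D.R y x := by
  have hyc : D.Sim y y c c := sim_diag_iff.mpr ⟨R_refl y, R_refl y⟩
  rw [← D.consistency y x y]
  exact ⟨fun h => D.trans_S hyc.1 h, fun h => D.trans_S hyc.2 h⟩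

theorem Sim.R_iff (h : D.Sim x y z w) : D.R x y ↔ D.R z w := by
  rw [← S_diag_right_iff (c := x), ← S_diag_right_iff (x := z) (c := x)]
  exact ⟨D.trans_S h.2, D.trans_S h.1⟩

theorem Sim.R_swap_iff (h : D.Sim x y z w) : D.R y x ↔ D.R w z := h.rev.R_iff.symm

theorem Sim.R_and_not_R_of_mid {m : X} (hm : D.Sim x m m y) (h : ¬ D.R y x) :
    D.R x m ∧ ¬ D.R y m := by
  have hym : ¬ D.R y m := fun hym => h (D.trans_R hym (hm.R_swap_iff.mpr hym))
  exact ⟨by_contra fun hxm => hym (R_of_not_R (mt hm.R_iff.mpr hxm)), hym⟩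

theorem Represents.R_iff (hv : D.Represents v) : D.R x y ↔ v x ≥ v y := by
  rw [← D.consistency x y y, hv]
  simp

theorem Represents.sub_pos_of_not_R {a b : X} (hv : D.Represents v) (hab : ¬ D.R b a) :
    0 < v a - v b :=
  sub_pos.mpr (not_le.mp (mt hv.R_iff.mpr hab))

theorem Represents.sim_iff (hv : D.Represents v) :
    D.Sim x y z w ↔ v x - v y = v z - v w := by
  rw [Sim, hv, hv]
  exact ⟨fun h => le_antisymm h.2 h.1, fun h => ⟨h.ge, h.le⟩⟩

theorem isClosed_setOf_S {Y : Type*} [TopologicalSpace Y] {f g h k : Y → X}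
    (hf : Continuous f) (hg : Continuous g) (hh : Continuous h) (hk : Continuous k) :
    IsClosed {t | D.S (f t) (g t) (h t) (k t)} :=
  D.isClosed_S.preimage (hf.prodMk (hg.prodMk (hh.prodMk hk)))

theorem isClosed_setOf_R_left (y : X) : IsClosed {x | D.R x y} := by
  simpa [D.consistency] using isClosed_setOf_S (D := D) (f := id) (g := fun _ => y)
    (h := fun _ => y) (k := fun _ => y) continuous_id continuous_const continuous_const
    continuous_const

theorem isClosed_setOf_R_right (x : X) : IsClosed {y | D.R x y} := by
  simpa [D.consistency] using isClosed_setOf_S (D := D) (f := fun _ => x) (g := id) (h := id)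
    (k := id) continuous_const continuous_id continuous_id continuous_id

variable (D) in
/-- `D.Fits e₁ e₂ n p q`: starting from `p`, `n` consecutive steps, each equivalent to
`(e₁, e₂)`, stay below `q`; that is, `q - p ≥ n (e₁ - e₂)`. -/
inductive Fits (e₁ e₂ : X) : ℕ → X → X → Prop
  | zero {p q : X} : D.R q p → Fits e₁ e₂ 0 p q
  | succ {n : ℕ} {p s q : X} :
      D.Sim s p e₁ e₂ → Fits e₁ e₂ n s q → Fits e₁ e₂ (n + 1) p q

theorem Fits.R (he : D.R e₁ e₂) (h : D.Fits e₁ e₂ n p q) : D.R q p := by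
  induction h with
  | zero h => exact h
  | succ hs _ ih => exact D.trans_R ih (hs.R_iff.mpr he)

theorem Fits.S (he : D.R e₁ e₂) (h : D.Fits e₁ e₂ n p q) (hn : n ≠ 0) :
    D.S q p e₁ e₂ := by
  cases h with
  | zero => contradiction
  | succ hs h => exact D.trans_S ((D.consistency _ _ p).mpr (h.R he)) hs.1

section Connected

variable [ConnectedSpace X]

theorem exists_sim_of_continuous {f g h k : X → X} (hf : Continuous f) (hg : Continuous g)
    (hh : Continuous h) (hk : Continuous k) (h₁ : ∃ t, D.S (f t) (g t) (h t) (k t))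
    (h₂ : ∃ t, D.S (h t) (k t) (f t) (g t)) : ∃ t, D.Sim (f t) (g t) (h t) (k t) := by
  obtain ⟨t, -, ht⟩ := isPreconnected_closed_iff.mp isPreconnected_univ _ _
    (isClosed_setOf_S hf hg hh hk) (isClosed_setOf_S hh hk hf hg)
    (fun t _ => D.total_S _ _ _ _) (h₁.imp fun _ ht => ⟨trivial, ht⟩)
    (h₂.imp fun _ ht => ⟨trivial, ht⟩)
  exact ⟨t, ht⟩

theorem exists_sim_fst (h₁ : ∃ t, D.S t p x y) (h₂ : ∃ t, D.S x y t p) :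
    ∃ t, D.Sim t p x y :=
  exists_sim_of_continuous (f := id) (g := fun _ => p) (h := fun _ => x) (k := fun _ => y)
    continuous_id continuous_const continuous_const continuous_const h₁ h₂

theorem exists_sim_snd (h₁ : ∃ t, D.S p t x y) (h₂ : ∃ t, D.S x y p t) :
    ∃ t, D.Sim p t x y :=
  exists_sim_of_continuous (f := fun _ => p) (g := id) (h := fun _ => x) (k := fun _ => y)
    continuous_const continuous_id continuous_const continuous_const h₁ h₂

theorem exists_sim_mid (x y : X) : ∃ m, D.Sim x m m y := by
  refine exists_sim_of_continuous (f := fun _ => x) (g := id) (h := id) (k := fun _ => y)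
    continuous_const continuous_id continuous_id continuous_const ?_ ?_
  · rcases D.total_R x y with hxy | hyx
    · exact ⟨y, (D.consistency x y y).mpr hxy⟩
    · exact ⟨x, S_diag_left_iff.mpr hyx⟩
  · rcases D.total_R x y with hxy | hyx
    · exact ⟨x, S_diag_right_iff.mpr hxy⟩
    · exact ⟨y, (D.consistency y x y).mpr hyx⟩

theorem S_same_left_of_R (h : D.R y x) : D.S c x c y := by
  by_contra hn
  have hS := S_of_not_S hn
  rcases D.total_R c x with hcx | hxc
  · obtain ⟨t, ht⟩ := exists_sim_fst ⟨c, hS⟩ ⟨y, S_diag_right_iff.mpr hcx⟩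
    have htc : D.R t c :=
      S_diag_left_iff.mp (D.trans_S ((S_diag_left_iff (c := c)).mpr h) ht.symm.cross.2)
    exact hn (D.trans_S ht.2 ((D.consistency t c y).mpr htc))
  · obtain ⟨t, ht⟩ := exists_sim_fst ⟨x, S_diag_left_iff.mpr (D.trans_R h hxc)⟩ ⟨c, hS⟩
    have hct : D.R c t :=
      S_diag_right_iff.mp (D.trans_S ht.symm.cross.1 ((S_diag_right_iff (c := c)).mpr h))
    exact hn (D.trans_S ((D.consistency c t x).mpr hct) ht.1)

theorem S_same_left_iff : D.S c x c y ↔ D.R y x := by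
  refine ⟨fun h => ?_, S_same_left_of_R⟩
  by_contra hyx
  have hsim : D.Sim c x c y := ⟨h, S_same_left_of_R (R_of_not_R hyx)⟩
  exact hyx (S_diag_left_iff.mp hsim.cross.1)

theorem exists_sim_of_R (h : D.S x y z w) (hyx : D.R y x) : ∃ t, D.Sim z t x y ∧ D.R w t :=
  have ⟨t, ht⟩ := exists_sim_snd ⟨z, S_diag_left_iff.mpr hyx⟩ ⟨w, h⟩
  ⟨t, ht, S_same_left_iff.mp (D.trans_S ht.1 h)⟩

theorem S_rev (h : D.S x y z w) : D.S w z y x := by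
  have key : ∀ {x y z w : X}, D.S x y z w → D.R y x → D.S w z y x := by
    intro x y z w h hyx
    obtain ⟨t, ht, hwt⟩ := exists_sim_of_R h hyx
    exact D.trans_S ((D.consistency w t z).mpr hwt) ht.rev.2
  by_cases hyx : D.R y x
  · exact key h hyx
  · by_contra hn
    have hsim : D.Sim x y z w := ⟨h, key (S_of_not_S hn) (R_of_not_R hyx)⟩
    exact hn hsim.rev.1

theorem S_cross (h : D.S x y z w) : D.S x z y w := by
  have key : ∀ {x y z w : X}, D.S x y z w → D.R y x → D.S x z y w := by
    intro x y z w h hyx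
    obtain ⟨t, ht, hwt⟩ := exists_sim_of_R h hyx
    exact D.trans_S ht.symm.cross.1 (S_same_left_iff.mpr hwt)
  by_cases hyx : D.R y x
  · exact key h hyx
  by_cases hzw : D.R z w
  · exact S_rev (key (S_rev h) hzw)
  · exact D.trans_S ((D.consistency x y z).mpr (R_of_not_R hyx))
      (S_same_left_iff.mpr (R_of_not_R hzw))

theorem S_add {a b c d e f : X} (h₁ : D.S a b c d) (h₂ : D.S b e d f) : D.S a e c f :=
  S_cross (D.trans_S (S_cross h₁) (S_cross h₂))

theorem Sim.add {a b c d e f : X} (h₁ : D.Sim a b c d) (h₂ : D.Sim b e d f) : D.Sim a e c f :=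
  ⟨S_add h₁.1 h₂.1, S_add h₁.2 h₂.2⟩

theorem Sim.half {m m' : X} (h : D.Sim x y z w) (hm : D.Sim x m m y) (hm' : D.Sim z m' m' w) :
    D.Sim m y m' w := by
  have key : ∀ {x y z w m m' : X}, D.S x y z w → D.Sim x m m y → D.Sim z m' m' w →
      D.S m y m' w := by
    intro x y z w m m' h hm hm'
    by_contra hn
    exact hn (D.trans_S (D.trans_S hm.2 (S_add h (S_rev (S_of_not_S hn)))) hm'.1)
  exact ⟨key h.1 hm hm', key h.2 hm' hm⟩

variable (D) in
noncomputable def mid (x y : X) : X := (D.exists_sim_mid x y).choose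

variable (D) in
theorem sim_mid (x y : X) : D.Sim x (D.mid x y) (D.mid x y) y :=
  (D.exists_sim_mid x y).choose_spec

section Fits

variable {f₁ f₂ m r : X}

theorem exists_step (he : D.R e₁ e₂) (h : D.S q p e₁ e₂) :
    ∃ s, D.Sim s p e₁ e₂ ∧ D.R q s :=
  have ⟨s, hs⟩ := exists_sim_fst ⟨q, h⟩ ⟨p, S_diag_right_iff.mpr he⟩
  ⟨s, hs, (D.consistency q s p).mp (D.trans_S h hs.2)⟩

theorem fits_one (he : D.R e₁ e₂) (h : D.S q p e₁ e₂) : D.Fits e₁ e₂ 1 p q :=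
  have ⟨_, hs, hqs⟩ := exists_step he h
  .succ hs (.zero hqs)

theorem Fits.mono {x' y' : X} (he : D.R e₁ e₂) (h : D.Fits e₁ e₂ n x y)
    (hS : D.S y' x' y x) : D.Fits e₁ e₂ n x' y' := by
  induction h generalizing x' with
  | zero hyx =>
    exact .zero (S_diag_right_iff.mp (D.trans_S hS (S_diag_right_iff (c := y).mpr hyx)))
  | succ hs h ih =>
    have hstep := D.trans_S hS (D.trans_S ((D.consistency _ _ _).mpr (h.R he)) hs.1)
    obtain ⟨s', hs', -⟩ := exists_step he hstep
    exact .succ hs' (ih (S_add hS (hs'.trans hs.symm).rev.2))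

theorem Fits.mono_left (he : D.R e₁ e₂) (h : D.Fits e₁ e₂ n p q) (hp : D.R p r) :
    D.Fits e₁ e₂ n r q :=
  h.mono he (S_same_left_iff.mpr hp)

theorem Fits.mono_right (he : D.R e₁ e₂) (h : D.Fits e₁ e₂ n p q) (hq : D.R r q) :
    D.Fits e₁ e₂ n p r :=
  h.mono he ((D.consistency r q p).mpr hq)

theorem Fits.of_succ (he : D.R e₁ e₂) (h : D.Fits e₁ e₂ (n + 1) p q) :
    D.Fits e₁ e₂ n p q := by
  cases h with
  | succ hs h => exact h.mono_left he (hs.R_iff.mpr he)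

theorem Fits.of_le {k : ℕ} (he : D.R e₁ e₂) (h : D.Fits e₁ e₂ n p q) (hkn : k ≤ n) :
    D.Fits e₁ e₂ k p q := by
  obtain ⟨d, rfl⟩ := Nat.exists_eq_add_of_le hkn
  induction d with
  | zero => exact h
  | succ d ih => exact ih (h.of_succ he) (by omega)

theorem Fits.add {k : ℕ} (he : D.R e₁ e₂) (h₁ : D.Fits e₁ e₂ k p q)
    (h₂ : D.Fits e₁ e₂ n q r) : D.Fits e₁ e₂ (k + n) p r := by
  induction h₁ with
  | zero hqp => simpa using h₂.mono_left he hqp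
  | succ hs _ ih => rw [Nat.add_right_comm]; exact .succ hs (ih h₂)

theorem Fits.exists_split (he : D.R e₁ e₂) (h : D.Fits e₁ e₂ n p r) (hqp : D.R q p)
    (hrq : D.R r q) :
    ∃ i j, n ≤ i + j + 1 ∧ D.Fits e₁ e₂ i p q ∧ D.Fits e₁ e₂ j q r := by
  induction h with
  | zero _ => exact ⟨0, 0, by omega, .zero hqp, .zero hrq⟩
  | @succ n p s r hs h ih =>
    by_cases hqs : D.R q s
    · obtain ⟨i, j, hij, hi, hj⟩ := ih hqs hrq
      exact ⟨i + 1, j, by omega, .succ hs hi, hj⟩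
    · exact ⟨0, n, by omega, .zero hqp, h.mono_left he (R_of_not_R hqs)⟩

theorem Fits.mono_step (hf : D.R f₁ f₂) (hef : D.S e₁ e₂ f₁ f₂)
    (h : D.Fits e₁ e₂ n p q) : D.Fits f₁ f₂ n p q := by
  induction h with
  | zero hqp => exact .zero hqp
  | succ hs _ ih =>
    obtain ⟨s', hs', hss'⟩ := exists_step hf (D.trans_S hs.1 hef)
    exact .succ hs' (ih.mono_left hf hss')

theorem Fits.split_steps (hm : D.Sim e₁ m m e₂) (h : D.Fits e₁ e₂ n p q) :
    D.Fits m e₂ (2 * n) p q := by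
  induction h with
  | zero hqp => exact .zero hqp
  | @succ n p s q hs _ ih =>
    have hc := D.sim_mid s p
    have hcp := hs.half hc hm
    rw [Nat.mul_succ]
    exact .succ hcp (.succ (hc.trans hcp) ih)

theorem Fits.merge_steps (hm : D.Sim e₁ m m e₂) (hme : D.R m e₂) (h : D.Fits m e₂ n p q) :
    D.Fits e₁ e₂ (n / 2) p q := by
  have key : ∀ n p, D.Fits m e₂ (2 * n) p q → D.Fits e₁ e₂ n p q := by
    intro n
    induction n with
    | zero => intro p h; cases h with | zero hqp => exact .zero hqp
    | succ n ih =>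
      intro p h
      rw [Nat.mul_succ] at h
      cases h with
      | succ hs h => cases h with
        | succ hs' h => exact .succ ((hs'.trans hm.symm).add hs) (ih _ h)
  exact key _ p (h.of_le hme (Nat.mul_div_le n 2))

theorem isClosed_setOf_fits (he : D.R e₁ e₂) (n : ℕ) (p : X) :
    IsClosed {q | D.Fits e₁ e₂ n p q} := by
  induction n generalizing p with
  | zero =>
    have : {q | D.Fits e₁ e₂ 0 p q} = {q | D.R q p} :=
      Set.ext fun q => ⟨fun h => h.R he, .zero⟩
    exact this ▸ isClosed_setOf_R_left p
  | succ n ih =>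
    by_cases hs : ∃ s, D.Sim s p e₁ e₂
    · obtain ⟨s₀, hs₀⟩ := hs
      have : {q | D.Fits e₁ e₂ (n + 1) p q} = {q | D.Fits e₁ e₂ n s₀ q} := by
        ext q
        refine ⟨fun h => ?_, .succ hs₀⟩
        cases h with
        | succ hs h => exact h.mono_left he ((D.consistency _ _ p).mp (hs.trans hs₀.symm).1)
      exact this ▸ ih s₀
    · have : {q | D.Fits e₁ e₂ (n + 1) p q} = ∅ := by
        ext q
        refine ⟨fun h => ?_, False.elim⟩
        cases h with
        | succ h _ => exact hs ⟨_, h⟩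
      exact this ▸ isClosed_empty

theorem exists_not_fits (he : ¬ D.R e₂ e₁) (p q : X) : ∃ N, ¬ D.Fits e₁ e₂ N p q := by
  have he' := R_of_not_R he
  by_contra! hall
  set C := {c | ∀ N, D.Fits e₁ e₂ N p c}
  have hC : IsClosed C := by
    simpa only [C, ofPred_forall] using isClosed_iInter fun N => isClosed_setOf_fits he' N p
  have hpC : p ∉ C := fun h => he (S_diag_left_iff.mp ((h 1).S he' one_ne_zero))
  obtain ⟨c, hc, hCc⟩ : ∃ c ∈ C, C ∉ 𝓝 c := by
    by_contra! h
    exact hpC ((IsClopen.eq_univ ⟨hC, isOpen_iff_mem_nhds.mpr h⟩ ⟨q, hall⟩) ▸ mem_univ p)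
  obtain ⟨hm₁, hm₂⟩ := (D.sim_mid e₁ e₂).R_and_not_R_of_mid he
  obtain ⟨c', hc'⟩ : ∃ c', D.Sim c c' (D.mid e₁ e₂) e₂ :=
    exists_sim_snd ⟨p, D.trans_S ((hc 1).S he' one_ne_zero) ((D.consistency _ _ _).mpr hm₁)⟩
      ⟨c, S_diag_right_iff.mpr (R_of_not_R hm₂)⟩
  -- `c - c'` is half a step, so `c'` still bounds every chain that `c` bounds with one step more
  have hc'C : {w | D.R c' w}ᶜ ⊆ C := by
    intro w hw N
    cases hc (N + 1) with
    | @succ _ _ s _ hs h =>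
      have hsc : D.S s p c c' :=
        D.trans_S (D.trans_S hs.1 ((D.consistency _ _ _).mpr hm₁)) hc'.2
      exact (h.mono he' (S_cross (S_rev hsc))).mono_right he' (R_of_not_R hw)
  exact hCc (mem_of_superset ((isClosed_setOf_R_right c').isOpen_compl.mem_nhds
    (mt hc'.R_swap_iff.mp hm₂)) hc'C)

end Fits

section Scale

variable {a b : X} {j k : ℕ}

variable (D) in
noncomputable def halve (a b : X) : ℕ → X
  | 0 => a
  | k + 1 => D.mid (halve a b k) b

theorem sim_halve_succ (a b : X) (k : ℕ) :
    D.Sim (D.halve a b k) (D.halve a b (k + 1)) (D.halve a b (k + 1)) b :=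
  D.sim_mid _ _

theorem not_R_halve (hab : ¬ D.R b a) (k : ℕ) : ¬ D.R b (D.halve a b k) := by
  induction k with
  | zero => exact hab
  | succ k ih => exact ((sim_halve_succ a b k).R_and_not_R_of_mid ih).2

theorem R_halve (hab : ¬ D.R b a) (k : ℕ) : D.R (D.halve a b k) b :=
  R_of_not_R (not_R_halve hab k)

theorem Fits.refine (h : D.Fits (D.halve a b k) b n p q) (d : ℕ) :
    D.Fits (D.halve a b (k + d)) b (2 ^ d * n) p q := by
  induction d with
  | zero => simpa using h
  | succ d ih =>
    rw [← add_assoc, pow_succ', mul_assoc]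
    exact ih.split_steps (sim_halve_succ a b (k + d))

theorem Fits.coarsen (hab : ¬ D.R b a) {d : ℕ} (h : D.Fits (D.halve a b (k + d)) b n p q) :
    D.Fits (D.halve a b k) b (n / 2 ^ d) p q := by
  induction d generalizing n with
  | zero => simpa using h
  | succ d ih =>
    simpa [Nat.div_div_eq_div_mul, pow_succ'] using
      ih (h.merge_steps (sim_halve_succ a b (k + d)) (R_halve hab _))

theorem fits_halve_two_pow (hab : ¬ D.R b a) (k : ℕ) : D.Fits (D.halve a b k) b (2 ^ k) b a := by
  simpa using (fits_one (R_of_not_R hab) (S_refl a b) : D.Fits (D.halve a b 0) b 1 b a).refine k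

theorem exists_fits_bound (hab : ¬ D.R b a) (p q : X) :
    ∃ N : ℕ, ∀ n k, D.Fits (D.halve a b k) b n p q → (n : ℝ) / 2 ^ k ≤ N := by
  obtain ⟨N, hN⟩ := exists_not_fits hab p q
  refine ⟨N, fun n k h => ?_⟩
  have hlt : n < N * 2 ^ k := by
    rw [← Nat.div_lt_iff_lt_mul (by positivity)]
    by_contra! hle
    exact hN ((Fits.coarsen (k := 0) hab (by simpa using h)).of_le (R_of_not_R hab) hle)
  rw [div_le_iff₀ (by positivity)]
  exact_mod_cast hlt.le

theorem exists_S_halve (hab : ¬ D.R b a) (h : ¬ D.R y x) : ∃ k, D.S x y (D.halve a b k) b := by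
  by_contra! hk
  obtain ⟨N, hN⟩ := exists_not_fits h b a
  exact hN (((fits_halve_two_pow hab N).mono_step (R_of_not_R h) (S_of_not_S (hk N))).of_le
    (R_of_not_R h) Nat.lt_two_pow_self.le)

theorem Fits.div_le_of_S_halve (hab : ¬ D.R b a) (hk : D.S (D.halve a b k) b q p)
    (h : D.Fits (D.halve a b j) b n p q) : (n : ℝ) / 2 ^ j ≤ 1 / 2 ^ k := by
  suffices hn : 2 ^ k * n ≤ 2 ^ j by
    rw [div_le_div_iff₀ (by positivity) (by positivity), one_mul, mul_comm]
    exact_mod_cast hn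
  by_contra! hlt
  cases (h.refine k).of_le (R_halve hab _) hlt with
  | succ hs hf =>
    rw [add_comm] at hs hf
    have hsq := (hf.coarsen hab).S (R_halve hab k) (by simp)
    exact hs.R_swap_iff.not.mpr (not_R_halve hab _) (S_same_left_iff.mp (D.trans_S hsq hk))

end Scale

section Length

variable {a b r s : X} {k : ℕ}

variable (D) in
def lengths (a b p q : X) : Set ℝ :=
  {x | ∃ n k : ℕ, D.Fits (D.halve a b k) b n p q ∧ (n : ℝ) / 2 ^ k = x}

variable (D) in
/-- `q - p` measured in units of `a - b`. -/
noncomputable def len (a b p q : X) : ℝ := sSup (D.lengths a b p q)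

theorem bddAbove_lengths (hab : ¬ D.R b a) (p q : X) : BddAbove (D.lengths a b p q) :=
  let ⟨N, hN⟩ := exists_fits_bound hab p q
  ⟨N, by rintro _ ⟨n, k, h, rfl⟩; exact hN n k h⟩

theorem zero_mem_lengths (h : D.R q p) : 0 ∈ D.lengths a b p q := ⟨0, 0, .zero h, by simp⟩

variable (D) in
theorem len_nonneg (a b p q : X) : 0 ≤ D.len a b p q :=
  Real.sSup_nonneg (by rintro _ ⟨n, k, -, rfl⟩; positivity)

theorem le_len (hab : ¬ D.R b a) (h : D.Fits (D.halve a b k) b n p q) :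
    (n : ℝ) / 2 ^ k ≤ D.len a b p q :=
  le_csSup (bddAbove_lengths hab p q) ⟨n, k, h, rfl⟩

theorem len_le {c : ℝ} (hc₀ : 0 ≤ c)
    (hc : ∀ n k, D.Fits (D.halve a b k) b n p q → (n : ℝ) / 2 ^ k ≤ c) :
    D.len a b p q ≤ c :=
  Real.sSup_le (by rintro _ ⟨n, k, h, rfl⟩; exact hc n k h) hc₀

theorem len_le_len_of_S (hab : ¬ D.R b a) (h : D.S q p s r) : D.len a b r s ≤ D.len a b p q :=
  len_le (D.len_nonneg a b p q) fun _ k hf => le_len hab (hf.mono (R_halve hab k) h)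

theorem len_le_one_div_two_pow (hab : ¬ D.R b a) (h : D.S (D.halve a b k) b q p) :
    D.len a b p q ≤ 1 / 2 ^ k :=
  len_le (by positivity) fun _ _ hf => hf.div_le_of_S_halve hab h

theorem len_pos (hab : ¬ D.R b a) (h : ¬ D.R y x) : 0 < D.len a b y x := by
  obtain ⟨k, hk⟩ := exists_S_halve hab h
  exact lt_of_lt_of_le (by positivity) (le_len hab (fits_one (R_halve hab k) hk))

theorem len_add (hab : ¬ D.R b a) (hqp : D.R q p) (hrq : D.R r q) :
    D.len a b p q + D.len a b q r = D.len a b p r := by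
  refine le_antisymm ?_ ?_
  · rw [len, len, ← csSup_add ⟨0, zero_mem_lengths hqp⟩ (bddAbove_lengths hab p q)
      ⟨0, zero_mem_lengths hrq⟩ (bddAbove_lengths hab q r)]
    refine csSup_le (.add ⟨0, zero_mem_lengths hqp⟩ ⟨0, zero_mem_lengths hrq⟩) ?_
    rintro _ ⟨_, ⟨n₁, k₁, h₁, rfl⟩, _, ⟨n₂, k₂, h₂, rfl⟩, rfl⟩
    have h₂' := h₂.refine k₁
    rw [add_comm] at h₂'
    calc (n₁ : ℝ) / 2 ^ k₁ + n₂ / 2 ^ k₂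
        = ((2 ^ k₂ * n₁ + 2 ^ k₁ * n₂ : ℕ) : ℝ) / 2 ^ (k₁ + k₂) := by
          push_cast; rw [pow_add]; field_simp
      _ ≤ D.len a b p r := le_len hab ((h₁.refine k₂).add (R_halve hab _) h₂')
  · refine len_le (add_nonneg (D.len_nonneg a b p q) (D.len_nonneg a b q r)) fun n k h =>
      le_of_forall_le_add_one_div_two_pow fun d => ?_
    obtain ⟨i, j, hij, hi, hj⟩ := (h.refine d).exists_split (R_halve hab _) hqp hrq
    have hd : (1 : ℝ) / 2 ^ (k + d) ≤ 1 / 2 ^ d :=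
      one_div_le_one_div_of_le (by positivity) (pow_le_pow_right₀ one_le_two (by omega))
    calc (n : ℝ) / 2 ^ k = ((2 ^ d * n : ℕ) : ℝ) / 2 ^ (k + d) := by
          push_cast; rw [pow_add]; field_simp
      _ ≤ ((i + j + 1 : ℕ) : ℝ) / 2 ^ (k + d) := by gcongr
      _ = i / 2 ^ (k + d) + j / 2 ^ (k + d) + 1 / 2 ^ (k + d) := by push_cast; ring
      _ ≤ D.len a b p q + D.len a b q r + 1 / 2 ^ d :=
          add_le_add (add_le_add (le_len hab hi) (le_len hab hj)) hd

theorem S_iff_len_le (hab : ¬ D.R b a) (hqp : D.R q p) :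
    D.S q p s r ↔ D.len a b r s ≤ D.len a b p q := by
  refine ⟨len_le_len_of_S hab, fun hle => ?_⟩
  by_contra hn
  obtain ⟨e, he⟩ := exists_sim_snd ⟨r, S_of_not_S hn⟩ ⟨s, S_diag_right_iff.mpr hqp⟩
  have hse : D.R s e := S_diag_right_iff.mp (D.trans_S he.1 (S_diag_right_iff (c := s).mpr hqp))
  have hre : ¬ D.R r e := fun hre => hn (D.trans_S he.2 (S_same_left_iff.mpr hre))
  linarith [len_add hab (R_of_not_R hre) hse, len_le_len_of_S hab he.1, len_pos hab hre]

end Length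
section Utility

variable {a b : X} {k : ℕ}

variable (D) in
open Classical in
noncomputable def utility (a b x : X) : ℝ :=
  if D.R x b then D.len a b b x else -D.len a b x b

theorem utility_sub (hab : ¬ D.R b a) (hxy : D.R x y) :
    D.utility a b x - D.utility a b y = D.len a b y x := by
  unfold utility
  by_cases hyb : D.R y b
  · rw [if_pos (D.trans_R hxy hyb), if_pos hyb]
    linarith [len_add hab hyb hxy]
  by_cases hxb : D.R x b
  · rw [if_pos hxb, if_neg hyb]
    linarith [len_add hab (R_of_not_R hyb) hxb]
  · rw [if_neg hxb, if_neg hyb]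
    linarith [len_add hab hxy (R_of_not_R hxb)]

theorem represents_utility (hab : ¬ D.R b a) : D.Represents (D.utility a b) := by
  have key : ∀ {x y z w : X}, D.R x y → D.R z w →
      (D.S x y z w ↔ D.utility a b x - D.utility a b y ≥ D.utility a b z - D.utility a b w) :=
    fun hxy hzw => by rw [utility_sub hab hxy, utility_sub hab hzw]; exact S_iff_len_le hab hxy
  intro x y z w
  by_cases hxy : D.R x y <;> by_cases hzw : D.R z w
  · exact key hxy hzw
  · refine iff_of_true (D.trans_S ((S_diag_right_iff (c := x)).mpr hxy)
      (S_diag_left_iff.mpr (R_of_not_R hzw))) ?_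
    linarith [utility_sub hab hxy, utility_sub hab (R_of_not_R hzw), D.len_nonneg a b y x,
      D.len_nonneg a b z w]
  · refine iff_of_false (fun h => hxy (S_diag_right_iff.mp
      (D.trans_S h ((S_diag_right_iff (c := x)).mpr hzw)))) ?_
    linarith [utility_sub hab (R_of_not_R hxy), utility_sub hab hzw, len_pos hab hxy,
      D.len_nonneg a b w z]
  · rw [show D.S x y z w ↔ D.S w z y x from ⟨S_rev, S_rev⟩,
      key (R_of_not_R hzw) (R_of_not_R hxy)]
    constructor <;> intro h <;> linarith

theorem eventually_utility_ge (hab : ¬ D.R b a) (x₀ : X) (k : ℕ) :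
    ∀ᶠ x in 𝓝 x₀, D.utility a b x₀ - 1 / 2 ^ k ≤ D.utility a b x := by
  by_cases h : ∃ t, D.S x₀ t (D.halve a b k) b
  · obtain ⟨t, ht⟩ := exists_sim_snd h ⟨x₀, S_diag_right_iff.mpr (R_halve hab k)⟩
    have htx : ¬ D.R t x₀ := mt ht.R_swap_iff.mp (not_R_halve hab k)
    have hstep := utility_sub hab (R_of_not_R htx) ▸ len_le_one_div_two_pow hab ht.2
    filter_upwards [(isClosed_setOf_R_right t).isOpen_compl.mem_nhds htx] with x hx
    linarith [utility_sub hab (R_of_not_R hx), D.len_nonneg a b t x]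
  · simp only [not_exists] at h
    refine .of_forall fun x => ?_
    by_cases hx : D.R x x₀
    · linarith [utility_sub hab hx, D.len_nonneg a b x₀ x,
        (by positivity : (0 : ℝ) < 1 / 2 ^ k)]
    · linarith [utility_sub hab (R_of_not_R hx), len_le_one_div_two_pow hab (S_of_not_S (h x))]

theorem eventually_utility_le (hab : ¬ D.R b a) (x₀ : X) (k : ℕ) :
    ∀ᶠ x in 𝓝 x₀, D.utility a b x ≤ D.utility a b x₀ + 1 / 2 ^ k := by
  by_cases h : ∃ t, D.S t x₀ (D.halve a b k) b
  · obtain ⟨t, ht⟩ := exists_sim_fst h ⟨x₀, S_diag_right_iff.mpr (R_halve hab k)⟩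
    have hxt : ¬ D.R x₀ t := mt ht.R_swap_iff.mp (not_R_halve hab k)
    have hstep := utility_sub hab (R_of_not_R hxt) ▸ len_le_one_div_two_pow hab ht.2
    filter_upwards [(isClosed_setOf_R_left t).isOpen_compl.mem_nhds hxt] with x hx
    linarith [utility_sub hab (R_of_not_R hx), D.len_nonneg a b x t]
  · simp only [not_exists] at h
    refine .of_forall fun x => ?_
    by_cases hx : D.R x₀ x
    · linarith [utility_sub hab hx, D.len_nonneg a b x x₀,
        (by positivity : (0 : ℝ) < 1 / 2 ^ k)]
    · linarith [utility_sub hab (R_of_not_R hx), len_le_one_div_two_pow hab (S_of_not_S (h x))]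

theorem continuous_utility (hab : ¬ D.R b a) : Continuous (D.utility a b) := by
  refine continuous_iff_continuousAt.mpr fun x₀ =>
    tendsto_order.mpr ⟨fun c hc => ?_, fun c hc => ?_⟩
  · obtain ⟨k, hk⟩ := exists_one_div_two_pow_lt (sub_pos.mpr hc)
    filter_upwards [eventually_utility_ge hab x₀ k] with x hx
    linarith
  · obtain ⟨k, hk⟩ := exists_one_div_two_pow_lt (sub_pos.mpr hc)
    filter_upwards [eventually_utility_le hab x₀ k] with x hx
    linarith

end Utility

section Uniqueness

variable {a b : X}

theorem Represents.map_mid (hv : D.Represents v) (x y : X) :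
    v (D.mid x y) = (v x + v y) / 2 := by
  linarith [hv.sim_iff.mp (D.sim_mid x y)]

theorem Represents.sub_halve (hv : D.Represents v) (a b : X) (k : ℕ) :
    v (D.halve a b k) - v b = (v a - v b) / 2 ^ k := by
  induction k with
  | zero => simp [halve]
  | succ k ih =>
    rw [halve, hv.map_mid, pow_succ, ← div_div, ← ih]
    ring

theorem Represents.fits_iff (hv : D.Represents v) (he : D.R e₁ e₂) :
    D.Fits e₁ e₂ n p q ↔ n * (v e₁ - v e₂) ≤ v q - v p := by
  have hδ : 0 ≤ v e₁ - v e₂ := sub_nonneg.mpr (hv.R_iff.mp he)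
  refine ⟨fun h => ?_, fun h => ?_⟩
  · induction h with
    | zero hqp => simpa using hv.R_iff.mp hqp
    | succ hs _ ih =>
      push_cast
      linarith [hv.sim_iff.mp hs]
  · induction n generalizing p with
    | zero => exact .zero (hv.R_iff.mpr (by simpa using h))
    | succ n ih =>
      push_cast at h
      have hn : 0 ≤ (n : ℝ) * (v e₁ - v e₂) := mul_nonneg n.cast_nonneg hδ
      obtain ⟨s, hs, -⟩ := exists_step he ((hv q p e₁ e₂).mpr (by linarith))
      exact .succ hs (ih (by linarith [hv.sim_iff.mp hs]))

theorem Represents.len_eq (hab : ¬ D.R b a) (hv : D.Represents v) (hqp : D.R q p) :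
    D.len a b p q = (v q - v p) / (v a - v b) := by
  have hα := hv.sub_pos_of_not_R hab
  have hfits : ∀ n k, D.Fits (D.halve a b k) b n p q ↔
      (n : ℝ) / 2 ^ k ≤ (v q - v p) / (v a - v b) := fun n k => by
    rw [hv.fits_iff (R_halve hab k), hv.sub_halve, le_div_iff₀ hα, div_mul_eq_mul_div,
      mul_div_assoc]
  simp only [len, lengths, hfits]
  exact csSup_dyadic_le (div_nonneg (sub_nonneg.mpr (hv.R_iff.mp hqp)) hα.le)

theorem Represents.eq_utility (hab : ¬ D.R b a) (hv : D.Represents v) (x : X) :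
    v x = (v a - v b) * D.utility a b x + v b := by
  have hα := (hv.sub_pos_of_not_R hab).ne'
  unfold utility
  split_ifs with hxb
  · rw [hv.len_eq hab hxb]
    field_simp
    ring
  · rw [hv.len_eq hab (R_of_not_R hxb)]
    field_simp
    ring

end Uniqueness

end Connected

end DifferenceStructure

theorem stmt16_general {X : Type*} [TopologicalSpace X] [ConnectedSpace X]
    (R : X → X → Prop) (S : X → X → X → X → Prop)
    (hRcomp : ∀ a b : X, R a b ∨ R b a)
    (hRtrans : ∀ a b c : X, R a b → R b c → R a c)
    (hScomp : ∀ a b c d : X, S a b c d ∨ S c d a b)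
    (hStrans : ∀ a b c d e f : X, S a b c d → S c d e f → S a b e f)
    (hA2 : ∀ x y z w : X, (S x y z w ∧ S z w x y) ↔ (S x z y w ∧ S y w x z))
    (hA3 : IsClosed {p : X × X × X × X | S p.1 p.2.1 p.2.2.1 p.2.2.2})
    (hA1 : ∀ a b c : X, S a c b c ↔ R a b) :
    ∃ u : X → ℝ, Continuous u ∧
      (∀ x y : X, R x y ↔ u x ≥ u y) ∧
      (∀ x y z w : X, S x y z w ↔ u x - u y ≥ u z - u w) ∧
      ∀ v : X → ℝ,
        ((∀ x y : X, R x y ↔ v x ≥ v y) ∧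
         (∀ x y z w : X, S x y z w ↔ v x - v y ≥ v z - v w)) →
        ∃ α β : ℝ, α > 0 ∧ ∀ x : X, v x = α * u x + β := by
  let D : DifferenceStructure X :=
    ⟨R, S, hRcomp, hRtrans _ _ _, hScomp, hStrans _ _ _ _ _ _, hA2, hA3, hA1⟩
  by_cases htriv : ∀ x y, R x y
  · obtain ⟨x₀⟩ : Nonempty X := inferInstance
    refine ⟨fun _ => 0, continuous_const, by simp [htriv], fun x y z w => ?_,
      fun v ⟨hv, _⟩ => ⟨1, v x₀, one_pos, fun x => ?_⟩⟩
    · simpa using D.trans_S ((D.S_diag_right_iff (c := x)).mpr (htriv x y))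
        (D.S_diag_left_iff.mpr (htriv w z))
    · linarith [(hv x x₀).mp (htriv x x₀), (hv x₀ x).mp (htriv x₀ x)]
  · simp only [not_forall] at htriv
    obtain ⟨b, a, hab⟩ := htriv
    have hu := D.represents_utility hab
    refine ⟨D.utility a b, D.continuous_utility hab, fun x y => hu.R_iff, hu, fun v hv => ?_⟩
    have hv : D.Represents v := hv.2
    exact ⟨v a - v b, v b, hv.sub_pos_of_not_R hab, hv.eq_utility hab⟩

theorem stmt16 {X : Type*} [TopologicalSpace X] [ConnectedSpace X]
    [TopologicalSpace.SeparableSpace X]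
    (R : X → X → Prop) (S : X → X → X → X → Prop)
    (hRcomp : ∀ a b : X, R a b ∨ R b a)
    (hRtrans : ∀ a b c : X, R a b → R b c → R a c)
    (hScomp : ∀ a b c d : X, S a b c d ∨ S c d a b)
    (hStrans : ∀ a b c d e f : X, S a b c d → S c d e f → S a b e f)
    (hA2 : ∀ x y z w : X, (S x y z w ∧ S z w x y) ↔ (S x z y w ∧ S y w x z))
    (hA3 : IsClosed {p : X × X × X × X | S p.1 p.2.1 p.2.2.1 p.2.2.2})
    (hA1 : ∀ a b c : X, S a c b c ↔ R a b) :
    ∃ u : X → ℝ, Continuous u ∧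
      (∀ x y : X, R x y ↔ u x ≥ u y) ∧
      (∀ x y z w : X, S x y z w ↔ u x - u y ≥ u z - u w) ∧
      ∀ v : X → ℝ,
        ((∀ x y : X, R x y ↔ v x ≥ v y) ∧
         (∀ x y z w : X, S x y z w ↔ v x - v y ≥ v z - v w)) →
        ∃ α β : ℝ, α > 0 ∧ ∀ x : X, v x = α * u x + β :=
  stmt16_general R S hRcomp hRtrans hScomp hStrans hA2 hA3 hA1
end

section
/- Suppose a differentiable function u : ℝ → ℝ satisfies x > y ⟺ u(x) > u(y) and xy P zw ⟺ u(x) − u(y) > u(z) − u(w) for relations > (usual order) and P on ordered quadruples. If v : ℝ → ℝ is any other function satisfying the same two equivalences for the same relations, then v is a strictly increasing transform of u that preserves equalities of differences; in particular, if v is also assumed to satisfy v(x) − v(y) = v(z) − v(w) whenever u(x) − u(y) = u(z) − u(w), then v = α u + β for some α > 0, β ∈ ℝ. -/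
/-!
Since `u` is continuous and strictly increasing, `v = g ∘ u` for a function `g` on the interval
`range u`, and `g` is monotone and assigns equal differences to equal differences. Such a `g` is
affine: on a grid `a + (k / m) (b - a)` it agrees with the chord through `(a, g a)` and `(b, g b)`
by additivity, and monotonicity squeezes every other point between two grid points whose chord
values differ by at most `(g b - g a) / m`.
-/

open Set Filter Topology

def PreservesEqualDifferencesOn (g : ℝ → ℝ) (I : Set ℝ) : Prop :=
  ∀ ⦃s t s' t'⦄, s ∈ I → t ∈ I → s' ∈ I → t' ∈ I → s - t = s' - t' → g s - g t = g s' - g t'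

lemma le_of_forall_le_add_div_natCast {y z c : ℝ} (h : ∀ m : ℕ, 0 < m → y ≤ z + c / m) :
    y ≤ z := by
  have hlim : Tendsto (fun m : ℕ => z + c / m) atTop (𝓝 z) := by
    simpa using tendsto_const_nhds.add (tendsto_const_div_atTop_nhds_zero_nat c)
  exact ge_of_tendsto hlim (eventually_atTop.2 ⟨1, fun m hm => h m hm⟩)

namespace PreservesEqualDifferencesOn

variable {g : ℝ → ℝ} {I : Set ℝ}

lemma add_natCast_mul_sub (hI : I.OrdConnected) (hg : PreservesEqualDifferencesOn g I)
    {t e : ℝ} (ht : t ∈ I) (he : 0 ≤ e) (n : ℕ) (hn : t + n * e ∈ I) :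
    g (t + n * e) - g t = n * (g (t + e) - g t) := by
  induction n with
  | zero => simp
  | succ n ih =>
    push_cast at hn ⊢
    have hn0 : (0 : ℝ) ≤ n := n.cast_nonneg
    have hnI : t + n * e ∈ I := hI.out ht hn ⟨by nlinarith, by nlinarith⟩
    have h1I : t + e ∈ I := hI.out ht hn ⟨by linarith, by nlinarith⟩
    have hstep := hg hn hnI h1I ht (by ring)
    linarith [ih hnI]

lemma add_div_mul_sub (hI : I.OrdConnected) (hg : PreservesEqualDifferencesOn g I)
    {a b : ℝ} (ha : a ∈ I) (hb : b ∈ I) (hab : a ≤ b) {k m : ℕ} (hm : 0 < m) (hkm : k ≤ m) :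
    g (a + k / m * (b - a)) - g a = k / m * (g b - g a) := by
  have hm' : (0 : ℝ) < m := by exact_mod_cast hm
  have hkm' : (k : ℝ) ≤ m := by exact_mod_cast hkm
  set e := (b - a) / m
  have he : 0 ≤ e := div_nonneg (sub_nonneg.2 hab) hm'.le
  have hme : a + m * e = b := by simp only [e]; field_simp; ring
  have hke : a + k / m * (b - a) = a + k * e := by simp only [e]; ring
  have hkI : a + k * e ∈ I := hI.out ha hb ⟨by nlinarith, by nlinarith⟩
  have hk := hg.add_natCast_mul_sub hI ha he k hkI
  have hmb := hg.add_natCast_mul_sub hI ha he m (hme ▸ hb)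
  rw [hme] at hmb
  rw [hke, hk, hmb]
  field_simp

lemma add_mul_sub_of_monotoneOn (hI : I.OrdConnected) (hmono : MonotoneOn g I)
    (hg : PreservesEqualDifferencesOn g I) {a b : ℝ} (ha : a ∈ I) (hb : b ∈ I) (hab : a ≤ b)
    {r : ℝ} (hr : r ∈ Icc 0 1) :
    g (a + r * (b - a)) - g a = r * (g b - g a) := by
  obtain ⟨hr0, hr1⟩ := hr
  have hG : 0 ≤ g b - g a := sub_nonneg.2 (hmono ha hb hab)
  have hmem : ∀ {s : ℝ}, 0 ≤ s → s ≤ 1 → a + s * (b - a) ∈ I := fun hs0 hs1 =>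
    hI.out ha hb ⟨by nlinarith, by nlinarith⟩
  have hle : ∀ {s s' : ℝ}, 0 ≤ s → s ≤ s' → s' ≤ 1 →
      g (a + s * (b - a)) ≤ g (a + s' * (b - a)) := fun hs hss' hs' =>
    hmono (hmem hs (hss'.trans hs')) (hmem (hs.trans hss') hs') (by nlinarith)
  apply le_antisymm
  · refine le_of_forall_le_add_div_natCast (c := g b - g a) fun m hm => ?_
    have hm' : (0 : ℝ) < m := by exact_mod_cast hm
    have hrm : 0 ≤ r * m := by positivity
    have hkm : ⌈r * m⌉₊ ≤ m := Nat.ceil_le.2 (by nlinarith)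
    have hkm' : (⌈r * m⌉₊ : ℝ) ≤ m := by exact_mod_cast hkm
    have hlo : r ≤ ⌈r * m⌉₊ / m := (le_div_iff₀ hm').2 (Nat.le_ceil _)
    have hhi : (⌈r * m⌉₊ : ℝ) / m ≤ r + 1 / m := by
      rw [div_le_iff₀ hm']; field_simp; linarith [Nat.ceil_lt_add_one hrm]
    calc g (a + r * (b - a)) - g a
        ≤ g (a + ⌈r * m⌉₊ / m * (b - a)) - g a :=
          sub_le_sub_right (hle hr0 hlo ((div_le_one hm').2 hkm')) _
      _ = ⌈r * m⌉₊ / m * (g b - g a) := hg.add_div_mul_sub hI ha hb hab hm hkm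
      _ ≤ (r + 1 / m) * (g b - g a) := mul_le_mul_of_nonneg_right hhi hG
      _ = r * (g b - g a) + (g b - g a) / m := by ring
  · refine le_of_forall_le_add_div_natCast (c := g b - g a) fun m hm => ?_
    have hm' : (0 : ℝ) < m := by exact_mod_cast hm
    have hkm : ⌊r * m⌋₊ ≤ m := Nat.floor_le_of_le (by nlinarith)
    have hhi : (⌊r * m⌋₊ : ℝ) / m ≤ r := (div_le_iff₀ hm').2 (Nat.floor_le (by positivity))
    have hlo : r - 1 / m ≤ ⌊r * m⌋₊ / m := by
      rw [le_div_iff₀ hm']; field_simp; linarith [Nat.lt_floor_add_one (r * m)]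
    calc r * (g b - g a)
        ≤ (⌊r * m⌋₊ / m + 1 / m) * (g b - g a) := mul_le_mul_of_nonneg_right (by linarith) hG
      _ = g (a + ⌊r * m⌋₊ / m * (b - a)) - g a + (g b - g a) / m := by
          rw [hg.add_div_mul_sub hI ha hb hab hm hkm]; ring
      _ ≤ g (a + r * (b - a)) - g a + (g b - g a) / m := by
          gcongr; exact hle (by positivity) hhi hr1

lemma sub_mul_sub_eq_of_monotoneOn (hI : I.OrdConnected) (hmono : MonotoneOn g I)
    (hg : PreservesEqualDifferencesOn g I) {a b x : ℝ} (ha : a ∈ I) (hb : b ∈ I) (hab : a ≤ b)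
    (hx : x ∈ I) :
    (g x - g a) * (b - a) = (x - a) * (g b - g a) := by
  have hsegment : ∀ {p q z : ℝ}, p ∈ I → q ∈ I → p ≤ z → z ≤ q →
      (g z - g p) * (q - p) = (z - p) * (g q - g p) := by
    intro p q z hp hq hpz hzq
    rcases hpz.eq_or_lt with rfl | hpz
    · ring
    have hpq : 0 < q - p := by linarith
    have hr : (z - p) / (q - p) ∈ Icc (0 : ℝ) 1 :=
      ⟨by positivity, (div_le_one hpq).2 (by linarith)⟩
    have h := hg.add_mul_sub_of_monotoneOn hI hmono hp hq (by linarith) hr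
    rw [div_mul_cancel₀ _ hpq.ne', add_sub_cancel] at h
    rw [h]; field_simp
  -- the identity says that the three points of the graph are collinear, a symmetric condition
  rcases le_total x a with hxa | hax
  · linear_combination -hsegment hx hb hxa hab
  rcases le_total x b with hxb | hbx
  · exact hsegment ha hb hax hxb
  · linear_combination -hsegment ha hx hab hbx

end PreservesEqualDifferencesOn

theorem stmt18_general (u : ℝ → ℝ) (hdiff : Differentiable ℝ u)
    (hu1 : ∀ x y : ℝ, x > y ↔ u x > u y)
    (v : ℝ → ℝ)
    (hv1 : ∀ x y : ℝ, x > y ↔ v x > v y)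
    (hv3 : ∀ x y z w : ℝ, u x - u y = u z - u w → v x - v y = v z - v w) :
    (∀ x y : ℝ, u x > u y ↔ v x > v y) ∧
    ∃ α β : ℝ, α > 0 ∧ ∀ x : ℝ, v x = α * u x + β := by
  have hu : StrictMono u := fun x y h => (hu1 y x).1 h
  have hv : StrictMono v := fun x y h => (hv1 y x).1 h
  set g := Function.extend u v 0
  have hgu : ∀ x, g (u x) = v x := hu.injective.extend_apply v 0
  have hI : (range u).OrdConnected := (isPreconnected_range hdiff.continuous).ordConnected
  have hmono : MonotoneOn g (range u) := by
    rintro _ ⟨x, rfl⟩ _ ⟨y, rfl⟩ h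
    rw [hgu, hgu]
    exact hv.monotone (hu.le_iff_le.1 h)
  have hg : PreservesEqualDifferencesOn g (range u) := by
    rintro _ _ _ _ ⟨x, rfl⟩ ⟨y, rfl⟩ ⟨z, rfl⟩ ⟨w, rfl⟩ h
    simp only [hgu]
    exact hv3 x y z w h
  have hu01 : 0 < u 1 - u 0 := sub_pos.2 (hu zero_lt_one)
  refine ⟨fun x y => (hu1 x y).symm.trans (hv1 x y), (v 1 - v 0) / (u 1 - u 0),
    v 0 - (v 1 - v 0) / (u 1 - u 0) * u 0, div_pos (sub_pos.2 (hv zero_lt_one)) hu01,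
    fun x => ?_⟩
  have hline := hg.sub_mul_sub_eq_of_monotoneOn hI hmono (mem_range_self 0) (mem_range_self 1)
    (hu zero_lt_one).le (mem_range_self x)
  simp only [hgu] at hline
  field_simp
  linear_combination hline

theorem stmt18 (u : ℝ → ℝ) (hdiff : Differentiable ℝ u)
    (P : ℝ → ℝ → ℝ → ℝ → Prop)
    (hu1 : ∀ x y : ℝ, x > y ↔ u x > u y)
    (hu2 : ∀ x y z w : ℝ, P x y z w ↔ u x - u y > u z - u w)
    (v : ℝ → ℝ)
    (hv1 : ∀ x y : ℝ, x > y ↔ v x > v y)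
    (hv2 : ∀ x y z w : ℝ, P x y z w ↔ v x - v y > v z - v w)
    (hv3 : ∀ x y z w : ℝ, u x - u y = u z - u w → v x - v y = v z - v w) :
    (∀ x y : ℝ, u x > u y ↔ v x > v y) ∧
    ∃ α β : ℝ, α > 0 ∧ ∀ x : ℝ, v x = α * u x + β :=
  stmt18_general u hdiff hu1 v hv1 hv3
end
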